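/- Let n ∈ ℕ, let d ∈ ℕ be even, and let ρ : ℝⁿ → [0,∞) be a nonnegative measurable kernel such that ∫_{ℝⁿ} y^α ρ(y) dy is finite for all multi-indices α ∈ ℕ₀ⁿ with |α| ≤ d. If p(x) = Σ_{i=1}^{k} (a_{i,0} + a_{i,1}x₁ + ⋯ + a_{i,n}xₙ)^d is a sum of d-th powers of affine linear forms, then the convolution (p ∗ ρ)(x) = ∫_{ℝⁿ} p(x−y) ρ(y) dy is again a sum of d-th powers of affine linear forms (with nonnegative scalar coefficients). -/

import Mathlib

/-!
Expanding in `t`, the function `t ↦ ∫ (g x + t) ^ d ρ x dμ` has as coefficient vector the integral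
of `ρ x • veronese d (g x, 1)`. Rescaling `(g x, 1)` onto the unit circle writes this integrand as
a nonnegative weight times a point of the compact set `K = veronese d '' sphere 0 1`, so its
integral is a nonnegative multiple of an average of points of `K`. In finite dimension the convex
hull of a compact set is compact (Carathéodory), hence closed, so that average is a convex
combination of finitely many `veronese d z`: the integral is a nonnegative combination of
`(z.1 + z.2 * t) ^ d`. Convolving a sum of `d`-th powers of affine forms gives a sum of such
integrals, with `g` affine in `y` and `t` linear in `x`.
-/

open MeasureTheory Set
open scoped NNReal

theorem isCompact_convexHull {E : Type*} [NormedAddCommGroup E] [NormedSpace ℝ E]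
    [FiniteDimensional ℝ E] {K : Set E} (hK : IsCompact K) : IsCompact (convexHull ℝ K) := by
  rcases K.eq_empty_or_nonempty with rfl | ⟨x₀, hx₀⟩
  · simp
  let D := Module.finrank ℝ E + 1
  let comb : (Fin D → ℝ) × (Fin D → E) → E := fun wz => ∑ i, wz.1 i • wz.2 i
  suffices convexHull ℝ K = comb '' (stdSimplex ℝ (Fin D) ×ˢ univ.pi fun _ => K) by
    rw [this]
    exact ((isCompact_stdSimplex ℝ (Fin D)).prod (isCompact_univ_pi fun _ => hK)).image
      (by fun_prop)
  refine subset_antisymm (fun x hx => ?_) ?_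
  · -- Carathéodory: `D` points of `K` suffice; pad them with zero weights.
    obtain ⟨ι, _, z, w, hzK, hz, hw0, hw1, rfl⟩ := eq_pos_convex_span_of_mem_convexHull hx
    obtain ⟨e⟩ : Nonempty (ι ↪ Fin D) := Function.Embedding.nonempty_of_card_le <| by
      simpa [D] using hz.card_le_finrank_succ.trans
        (Nat.succ_le_succ (Submodule.finrank_le _))
    refine ⟨(Function.extend e w fun _ => 0, Function.extend e z fun _ => x₀),
      ⟨⟨fun i => ?_, ?_⟩, fun i _ => ?_⟩, ?_⟩
    · by_cases hi : i ∈ range e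
      · obtain ⟨j, rfl⟩ := hi
        simpa [e.injective.extend_apply] using (hw0 j).le
      · simp [Function.extend_apply' _ _ _ hi]
    · rw [← hw1]
      exact (Fintype.sum_of_injective e e.injective w (Function.extend e w fun _ => 0)
        (fun i hi => Function.extend_apply' _ _ _ hi)
        fun j => (e.injective.extend_apply ..).symm).symm
    · by_cases hi : i ∈ range e
      · obtain ⟨j, rfl⟩ := hi
        simpa [e.injective.extend_apply] using hzK (mem_range_self j)
      · simpa [Function.extend_apply' _ _ _ hi] using hx₀
    · refine (Fintype.sum_of_injective e e.injective _ _
        (fun i hi => by simp [Function.extend_apply' _ _ _ hi]) fun j => ?_).symm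
      simp [e.injective.extend_apply]
  · rintro _ ⟨⟨w, z⟩, ⟨⟨hw0, hw1⟩, hz⟩, rfl⟩
    exact mem_convexHull_of_exists_fintype w z hw0 hw1 (fun i => hz i trivial) rfl

section ConeIntegral

variable {X E : Type*} [MeasurableSpace X] [NormedAddCommGroup E] [NormedSpace ℝ E]
  [CompleteSpace E] {μ : Measure X} {C : Set E}

theorem Convex.integral_mem_hull [IsFiniteMeasure μ] (hC : Convex ℝ C) (hCc : IsClosed C)
    {f : X → E} (hf : Integrable f μ) (hfC : ∀ᵐ x ∂μ, f x ∈ C) :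
    ∫ x, f x ∂μ ∈ PointedCone.hull ℝ C := by
  rcases eq_zero_or_neZero μ with rfl | _
  · simp
  · rw [← measure_smul_average]
    exact PointedCone.smul_mem _ measureReal_nonneg
      (PointedCone.subset_hull (hC.average_mem hCc hfC hf))

theorem Convex.integral_smul_mem_hull (hC : Convex ℝ C) (hCc : IsClosed C)
    {w : X → ℝ≥0} (hw : AEMeasurable w μ) (hwi : Integrable (fun x => (w x : ℝ)) μ)
    {u : X → E} (hu : Integrable (fun x => w x • u x) μ) (huC : ∀ x, u x ∈ C) :
    ∫ x, w x • u x ∂μ ∈ PointedCone.hull ℝ C := by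
  have : IsFiniteMeasure (μ.withDensity fun x => w x) :=
    isFiniteMeasure_withDensity (by simpa using hwi.lintegral_lt_top.ne)
  rw [← integral_withDensity_eq_integral_smul₀ hw]
  exact hC.integral_mem_hull hCc ((integrable_withDensity_iff_integrable_smul₀ hw).2 hu)
    (.of_forall huC)

end ConeIntegral

section Veronese

variable (d : ℕ)

/-- The coefficient vector of `t ↦ (z.1 + z.2 * t) ^ d`, indexed by the power of `t`. -/
def veronese (z : ℝ × ℝ) : Fin (d + 1) → ℝ :=
  fun s => d.choose s * z.1 ^ (d - s) * z.2 ^ (s : ℕ)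

def coeffEval (t : ℝ) : (Fin (d + 1) → ℝ) →L[ℝ] ℝ :=
  ∑ s : Fin (d + 1), t ^ (s : ℕ) • ContinuousLinearMap.proj s

lemma coeffEval_apply (t : ℝ) (v : Fin (d + 1) → ℝ) :
    coeffEval d t v = ∑ s : Fin (d + 1), t ^ (s : ℕ) * v s := by
  simp [coeffEval]

lemma coeffEval_veronese (t : ℝ) (z : ℝ × ℝ) :
    coeffEval d t (veronese d z) = (z.1 + z.2 * t) ^ d := by
  rw [coeffEval_apply, add_comm z.1, add_pow, ← Fin.sum_univ_eq_sum_range]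
  refine Finset.sum_congr rfl fun s _ => ?_
  simp only [veronese]
  ring

lemma coeffEval_smul_veronese (t r s : ℝ) :
    coeffEval d t (r • veronese d (s, 1)) = (s + t) ^ d * r := by
  rw [map_smul, coeffEval_veronese, smul_eq_mul, one_mul, mul_comm]

lemma veronese_smul (r : ℝ) (z : ℝ × ℝ) : veronese d (r • z) = r ^ d • veronese d z := by
  ext s
  have hr : r ^ d = r ^ (d - s) * r ^ (s : ℕ) := by
    rw [← pow_add, Nat.sub_add_cancel (Nat.lt_succ_iff.mp s.isLt)]
  simp only [veronese, Prod.smul_fst, Prod.smul_snd, smul_eq_mul, Pi.smul_apply, mul_pow, hr]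
  ring

lemma norm_pow_le_norm_veronese (z : ℝ × ℝ) : ‖z‖ ^ d ≤ ‖veronese d z‖ := by
  rw [Prod.norm_def]
  rcases max_cases ‖z.1‖ ‖z.2‖ with ⟨h, -⟩ | ⟨h, -⟩ <;> rw [h]
  · simpa [veronese] using norm_le_pi_norm (veronese d z) 0
  · simpa [veronese] using norm_le_pi_norm (veronese d z) (Fin.last d)

lemma isCompact_veronese_image_sphere : IsCompact (veronese d '' Metric.sphere 0 1) :=
  (isCompact_sphere 0 1).image (by unfold veronese; fun_prop)

end Veronese

section Moments

variable {σ : Type*} [Fintype σ] {μ : Measure (σ → ℝ)} {ρ : (σ → ℝ) → ℝ} {d : ℕ}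

def HasFiniteMoments (μ : Measure (σ → ℝ)) (ρ : (σ → ℝ) → ℝ) (d : ℕ) : Prop :=
  ∀ α : σ → ℕ, ∑ i, α i ≤ d → Integrable (fun y => (∏ i, y i ^ α i) * ρ y) μ

theorem integrable_eval_mul_of_totalDegree_le (hmom : HasFiniteMoments μ ρ d)
    {q : MvPolynomial σ ℝ} (hq : q.totalDegree ≤ d) :
    Integrable (fun y => MvPolynomial.eval y q * ρ y) μ := by
  simp_rw [MvPolynomial.eval_eq', Finset.sum_mul, mul_assoc]
  refine integrable_finsetSum _ fun α hα => (hmom α ?_).const_mul _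
  simpa [Finsupp.sum_fintype] using (MvPolynomial.le_totalDegree hα).trans hq

theorem integrable_affine_pow_mul (hmom : HasFiniteMoments μ ρ d) (c : ℝ) (l : σ → ℝ)
    {e : ℕ} (he : e ≤ d) :
    Integrable (fun y => (c + ∑ j, l j * y j) ^ e * ρ y) μ := by
  open MvPolynomial in
  have hdeg : (C c + ∑ j, C (l j) * X j : MvPolynomial σ ℝ).totalDegree ≤ 1 := by
    refine (totalDegree_add _ _).trans (max_le (by simp) ?_)
    refine (totalDegree_finsetSum _ _).trans (Finset.sup_le fun j _ => ?_)
    exact (totalDegree_mul _ _).trans (by simp [totalDegree_X])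
  simpa using integrable_eval_mul_of_totalDegree_le hmom
    ((totalDegree_pow _ e).trans ((Nat.mul_le_mul_left e hdeg).trans (by omega)))

theorem integrable_smul_veronese (hmom : HasFiniteMoments μ ρ d) (c : ℝ) (l : σ → ℝ) :
    Integrable (fun y => ρ y • veronese d (c + ∑ j, l j * y j, 1)) μ := by
  refine integrable_pi_iff.2 fun s => ?_
  simpa [veronese, mul_comm, mul_left_comm] using
    (integrable_affine_pow_mul hmom c l (d.sub_le s)).const_mul (d.choose s)

end Moments

theorem integral_smul_veronese_mem_hull {X : Type*} [MeasurableSpace X] {μ : Measure X}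
    {d : ℕ} {ρ g : X → ℝ} (hρ : ∀ x, 0 ≤ ρ x) (hg : AEMeasurable g μ)
    (hint : Integrable (fun x => ρ x • veronese d (g x, 1)) μ) :
    ∫ x, ρ x • veronese d (g x, 1) ∂μ ∈ PointedCone.hull ℝ (range (veronese d)) := by
  have hρm : AEMeasurable ρ μ := by
    simpa [veronese] using (hint.eval (Fin.last d)).aemeasurable
  -- Normalise `(g x, 1)` onto the unit sphere, moving its norm into the weight.
  have hz x : (g x, (1 : ℝ)) ≠ 0 := fun h => one_ne_zero (congrArg Prod.snd h)
  let r x := ‖(g x, (1 : ℝ))‖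
  let w x := (ρ x * r x ^ d).toNNReal
  let u x := veronese d ((r x)⁻¹ • (g x, 1))
  have hw_eq x : (w x : ℝ) = ρ x * r x ^ d := Real.coe_toNNReal _ (by positivity [hρ x])
  have hwu x : ρ x • veronese d (g x, 1) = w x • u x := by
    conv_lhs => rw [← smul_inv_smul₀ (norm_ne_zero_iff.2 (hz x)) (g x, (1 : ℝ))]
    rw [veronese_smul, smul_smul, NNReal.smul_def, hw_eq]
  have hw : AEMeasurable w μ := by fun_prop
  have hw_int : Integrable (fun x => (w x : ℝ)) μ := by
    refine hint.norm.mono' (by fun_prop) (.of_forall fun x => ?_)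
    rw [hw_eq, Real.norm_of_nonneg (by positivity [hρ x]), norm_smul,
      Real.norm_of_nonneg (hρ x)]
    exact mul_le_mul_of_nonneg_left (norm_pow_le_norm_veronese d _) (hρ x)
  have hhull : PointedCone.hull ℝ (convexHull ℝ (veronese d '' Metric.sphere 0 1)) ≤
      PointedCone.hull ℝ (range (veronese d)) :=
    Submodule.span_le.2 <| convexHull_min (fun _ ⟨z, _, hz⟩ => PointedCone.subset_hull ⟨z, hz⟩)
      (PointedCone.convex _)
  simp_rw [hwu] at hint ⊢
  refine hhull <| (convex_convexHull ℝ _).integral_smul_mem_hull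
    (isCompact_convexHull (isCompact_veronese_image_sphere d)).isClosed hw hw_int hint
    fun x => subset_convexHull ℝ _ ⟨_, ?_, rfl⟩
  exact mem_sphere_zero_iff_norm.2 (norm_smul_inv_norm (𝕜 := ℝ) (hz x))

/-- The Waring cone `War(n, d)`. -/
def waringCone (n d : ℕ) : PointedCone ℝ ((Fin n → ℝ) → ℝ) :=
  PointedCone.hull ℝ (range fun ab : ℝ × (Fin n → ℝ) => fun x => (ab.1 + ∑ j, ab.2 j * x j) ^ d)

theorem exists_sum_of_mem_waringCone {n d : ℕ} {q : (Fin n → ℝ) → ℝ}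
    (hq : q ∈ waringCone n d) :
    ∃ (m : ℕ) (c : Fin m → ℝ) (a : Fin m → ℝ) (b : Fin m → Fin n → ℝ), (∀ i, 0 ≤ c i) ∧
      ∀ x, q x = ∑ i, c i * (a i + ∑ j, b i j * x j) ^ d := by
  obtain ⟨m, c, g, rfl⟩ := Submodule.mem_span_set'.1 hq
  choose ab hab using fun i => (g i).2
  refine ⟨m, fun i => c i, fun i => (ab i).1, fun i => (ab i).2, fun i => (c i).2, fun x => ?_⟩
  simp only [← hab, Finset.sum_apply, Pi.smul_apply]
  rfl

theorem coeffEval_mem_waringCone {n d : ℕ} {v : Fin (d + 1) → ℝ}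
    (hv : v ∈ PointedCone.hull ℝ (range (veronese d))) (b : Fin n → ℝ) :
    (fun x => coeffEval d (∑ j, b j * x j) v) ∈ waringCone n d := by
  let L : (Fin (d + 1) → ℝ) →ₗ[ℝ] (Fin n → ℝ) → ℝ :=
    LinearMap.pi fun x => (coeffEval d (∑ j, b j * x j) : (Fin (d + 1) → ℝ) →ₗ[ℝ] ℝ)
  have hL : PointedCone.map L (PointedCone.hull ℝ (range (veronese d))) ≤ waringCone n d := by
    rw [PointedCone.map, Submodule.map_span]
    refine Submodule.span_mono ?_
    rintro _ ⟨_, ⟨z, rfl⟩, rfl⟩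
    exact ⟨(z.1, z.2 • b), by ext x; simp [L, coeffEval_veronese, Finset.mul_sum, mul_assoc]⟩
  exact hL (PointedCone.mem_map.2 ⟨v, hv, rfl⟩)

theorem waring_conv_kernel_general (n : ℕ) (d : ℕ)
    (ρ : (Fin n → ℝ) → ℝ) (hρnonneg : ∀ y, 0 ≤ ρ y)
    (hmom : ∀ α : Fin n → ℕ, (∑ i, α i) ≤ d →
      Integrable (fun y : Fin n → ℝ => (∏ i, y i ^ α i) * ρ y))
    (k : ℕ) (a : Fin k → ℝ) (b : Fin k → Fin n → ℝ)
    (p : (Fin n → ℝ) → ℝ)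
    (hp : ∀ x : Fin n → ℝ, p x = ∑ i, (a i + ∑ j, b i j * x j) ^ d) :
    ∃ (m : ℕ) (c : Fin m → ℝ) (a' : Fin m → ℝ) (b' : Fin m → Fin n → ℝ),
      (∀ i, 0 ≤ c i) ∧
      ∀ x : Fin n → ℝ,
        (∫ y : Fin n → ℝ, p (x - y) * ρ y)
          = ∑ i, c i * (a' i + ∑ j, b' i j * x j) ^ d := by
  let A (i : Fin k) (y : Fin n → ℝ) := a i + ∑ j, -b i j * y j
  let t (i : Fin k) (x : Fin n → ℝ) := ∑ j, b i j * x j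
  have hint i : Integrable (fun y => ρ y • veronese d (A i y, 1)) :=
    integrable_smul_veronese hmom _ _
  have hpt x y : p (x - y) * ρ y = ∑ i, coeffEval d (t i x) (ρ y • veronese d (A i y, 1)) := by
    simp only [hp, coeffEval_smul_veronese, Finset.sum_mul, A, t]
    refine Finset.sum_congr rfl fun i _ => ?_
    simp only [Pi.sub_apply, mul_sub, Finset.sum_sub_distrib, neg_mul, Finset.sum_neg_distrib]
    ring
  have hconv : (fun x => ∫ y, p (x - y) * ρ y) =
      ∑ i, fun x => coeffEval d (t i x) (∫ y, ρ y • veronese d (A i y, 1)) := by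
    ext x
    simp_rw [hpt x, Finset.sum_apply]
    rw [integral_finsetSum _ fun i _ => (coeffEval d _).integrable_comp (hint i)]
    simp_rw [ContinuousLinearMap.integral_comp_comm _ (hint _)]
  refine exists_sum_of_mem_waringCone (q := fun x => ∫ y, p (x - y) * ρ y) ?_
  rw [hconv]
  exact Submodule.sum_mem _ fun i _ => coeffEval_mem_waringCone
    (integral_smul_veronese_mem_hull hρnonneg (by fun_prop) (hint i)) (b i)

/-- Convolution with a nonnegative kernel having finite moments up to degree `d` maps sums
of `d`-th powers of affine linear forms (Waring cone, `d` even) to nonnegative combinations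
of `d`-th powers of affine linear forms. -/
theorem waring_conv_kernel (n : ℕ) (d : ℕ) (hd : Even d) (hd0 : 0 < d)
    (ρ : (Fin n → ℝ) → ℝ) (hρmeas : Measurable ρ) (hρnonneg : ∀ y, 0 ≤ ρ y)
    (hmom : ∀ α : Fin n → ℕ, (∑ i, α i) ≤ d →
      Integrable (fun y : Fin n → ℝ => (∏ i, y i ^ α i) * ρ y))
    (k : ℕ) (a : Fin k → ℝ) (b : Fin k → Fin n → ℝ)
    (p : (Fin n → ℝ) → ℝ)
    (hp : ∀ x : Fin n → ℝ, p x = ∑ i, (a i + ∑ j, b i j * x j) ^ d) :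
    ∃ (m : ℕ) (c : Fin m → ℝ) (a' : Fin m → ℝ) (b' : Fin m → Fin n → ℝ),
      (∀ i, 0 ≤ c i) ∧
      ∀ x : Fin n → ℝ,
        (∫ y : Fin n → ℝ, p (x - y) * ρ y)
          = ∑ i, c i * (a' i + ∑ j, b' i j * x j) ^ d :=
  waring_conv_kernel_general n d ρ hρnonneg hmom k a b p hp
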